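/- Suppose F has a density f on [0,1] with 0 < f_min ≤ f(x) ≤ f_max < ∞ for all x ∈ [0,1]. Then for every positive integer m, f_min/(m+1) ≤ sup_{x ∈ [0,1]} |F^{(m)}(x) − F(x)| ≤ f_max · √(2π)/√m. -/

import Mathlib

/-!
Write `B_m(x, s) = P(Binomial(m, s) / m ≤ x)`. Conditioning on `s` turns both CDFs into integrals
against the density: `F^{(m)}(x) - F(x) = ∫₀¹ f(s) (B_m(x, s) - 1_{s ≤ x}) ds`.

Upper bound: Chebyshev's inequality with the binomial variance `s(1 - s)/m ≤ 1/(4m)` gives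
`|B_m(x, s) - 1_{s ≤ x}| ≤ min(1, c/(s - x)²)` with `c = 1/(4m)`, and
`∫ min(1, c/u²) du = 4√c = 2/√m ≤ √(2π)/√m`.

Lower bound: at `x = 0` we have `F(0) = 0`, while only `k = 0` contributes to `B_m(0, s) = (1 - s)^m`,
so `F^{(m)}(0) = ∫₀¹ f(s)(1 - s)^m ds ≥ f_min/(m + 1)`.
-/

open MeasureTheory ProbabilityTheory Real

noncomputable section

/-- pmf of Binomial(m, s) at k. -/
def binomPMFr (m k : ℕ) (s : ℝ) : ℝ := (m.choose k : ℝ) * s ^ k * (1 - s) ^ (m - k)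

/-- Law of ŝ = X/m where X ~ Binomial(m, s). -/
def binomLaw (m : ℕ) (s : ℝ) : Measure ℝ :=
  ∑ k ∈ Finset.range (m + 1), ENNReal.ofReal (binomPMFr m k s) • Measure.dirac ((k : ℝ) / m)

/-- Binomial-mixture law of ŝ where s ~ μ. -/
def mixLaw (μ : Measure ℝ) (m : ℕ) : Measure ℝ := μ.bind (binomLaw m)

/-- CDF of a measure. -/
def cdfOf (μ : Measure ℝ) (x : ℝ) : ℝ := (μ (Set.Iic x)).toReal

/-- Distribution on `[0,1]` with Lebesgue density `f`. -/
def densityMeasure (f : ℝ → ℝ) : Measure ℝ :=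
  (volume.restrict (Set.Icc (0:ℝ) 1)).withDensity fun x => ENNReal.ofReal (f x)

open Set

lemma binomPMFr_nonneg (m k : ℕ) {s : ℝ} (hs : s ∈ Icc (0 : ℝ) 1) : 0 ≤ binomPMFr m k s := by
  obtain ⟨hs0, hs1⟩ := hs
  have : 0 ≤ 1 - s := sub_nonneg.2 hs1
  unfold binomPMFr
  positivity

lemma eval_bernsteinPolynomial (m k : ℕ) (s : ℝ) :
    (bernsteinPolynomial ℝ m k).eval s = binomPMFr m k s := by
  simp [bernsteinPolynomial, binomPMFr]

lemma sum_binomPMFr (m : ℕ) (s : ℝ) : ∑ k ∈ Finset.range (m + 1), binomPMFr m k s = 1 := by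
  simpa [Polynomial.eval_finsetSum, eval_bernsteinPolynomial] using
    congrArg (Polynomial.eval s) (bernsteinPolynomial.sum ℝ m)

lemma sum_sq_sub_mul_binomPMFr (m : ℕ) (s : ℝ) :
    ∑ k ∈ Finset.range (m + 1), (m * s - k) ^ 2 * binomPMFr m k s = m * s * (1 - s) := by
  simpa [Polynomial.eval_finsetSum, eval_bernsteinPolynomial] using
    congrArg (Polynomial.eval s) (bernsteinPolynomial.variance ℝ m)

lemma sum_binomPMFr_le_of_le_abs_sub {m : ℕ} (hm : 0 < m) {s t : ℝ} (hs : s ∈ Icc (0 : ℝ) 1)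
    (ht : 0 < t) {S : Finset ℕ} (hS : S ⊆ Finset.range (m + 1))
    (hdev : ∀ k ∈ S, t ≤ |k / m - s|) :
    ∑ k ∈ S, binomPMFr m k s ≤ (4 * (m : ℝ))⁻¹ / t ^ 2 := by
  have hm' : (0 : ℝ) < m := Nat.cast_pos.2 hm
  have hdev_sq : ∀ k ∈ S, (m * t) ^ 2 ≤ (m * s - k) ^ 2 := fun k hk => by
    have : m * t ≤ |m * s - k| := by
      rw [show (m : ℝ) * s - k = -(m * (k / m - s)) by field_simp; ring, abs_neg, abs_mul,
        abs_of_pos hm']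
      exact mul_le_mul_of_nonneg_left (hdev k hk) hm'.le
    simpa [sq_abs] using pow_le_pow_left₀ (by positivity) this 2
  have key : (m * t) ^ 2 * ∑ k ∈ S, binomPMFr m k s ≤ m / 4 := calc
    _ = ∑ k ∈ S, (m * t) ^ 2 * binomPMFr m k s := Finset.mul_sum _ _ _
    _ ≤ ∑ k ∈ S, (m * s - k) ^ 2 * binomPMFr m k s :=
      Finset.sum_le_sum fun k hk => mul_le_mul_of_nonneg_right (hdev_sq k hk)
        (binomPMFr_nonneg m k hs)
    _ ≤ ∑ k ∈ Finset.range (m + 1), (m * s - k) ^ 2 * binomPMFr m k s :=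
      Finset.sum_le_sum_of_subset_of_nonneg hS fun k _ _ =>
        mul_nonneg (sq_nonneg _) (binomPMFr_nonneg m k hs)
    _ = m * (s * (1 - s)) := by rw [sum_sq_sub_mul_binomPMFr, mul_assoc]
    _ ≤ m / 4 := by nlinarith [sq_nonneg (s - 1 / 2)]
  rw [le_div_iff₀ (by positivity)]
  field_simp
  nlinarith

def binomCdf (m : ℕ) (x s : ℝ) : ℝ :=
  ∑ k ∈ (Finset.range (m + 1)).filter (fun k : ℕ => (k : ℝ) / m ≤ x), binomPMFr m k s

lemma continuous_binomCdf (m : ℕ) (x : ℝ) : Continuous (binomCdf m x) := by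
  unfold binomCdf binomPMFr
  fun_prop

lemma binomCdf_nonneg (m : ℕ) (x : ℝ) {s : ℝ} (hs : s ∈ Icc (0 : ℝ) 1) : 0 ≤ binomCdf m x s :=
  Finset.sum_nonneg fun k _ => binomPMFr_nonneg m k hs

lemma one_sub_binomCdf (m : ℕ) (x s : ℝ) :
    1 - binomCdf m x s
      = ∑ k ∈ (Finset.range (m + 1)).filter (fun k : ℕ => ¬ (k : ℝ) / m ≤ x), binomPMFr m k s := by
  rw [← sum_binomPMFr m s, binomCdf,
    ← Finset.sum_filter_add_sum_filter_not _ (fun k : ℕ => (k : ℝ) / m ≤ x)]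
  ring

lemma binomCdf_le_one (m : ℕ) (x : ℝ) {s : ℝ} (hs : s ∈ Icc (0 : ℝ) 1) : binomCdf m x s ≤ 1 := by
  rw [← sub_nonneg, one_sub_binomCdf]
  exact Finset.sum_nonneg fun k _ => binomPMFr_nonneg m k hs

/-- The hypothesis `s ≠ x` matters: at `s = x` the right-hand side is the junk value
`min 1 (c / 0) = 0`. -/
lemma abs_binomCdf_sub_indicator_le {m : ℕ} (hm : 0 < m) {x s : ℝ} (hs : s ∈ Icc (0 : ℝ) 1)
    (hsx : s ≠ x) :
    |binomCdf m x s - (Iic x).indicator 1 s| ≤ min 1 ((4 * (m : ℝ))⁻¹ / (s - x) ^ 2) := by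
  have ht : 0 < |s - x| := abs_pos.2 (sub_ne_zero.2 hsx)
  rw [← sq_abs (s - x)]
  rcases lt_or_gt_of_ne hsx with hlt | hgt
  · rw [indicator_of_mem (mem_Iic.2 hlt.le), Pi.one_apply, abs_sub_comm,
      abs_of_nonneg (sub_nonneg.2 (binomCdf_le_one m x hs)), one_sub_binomCdf]
    refine le_min ?_ (sum_binomPMFr_le_of_le_abs_sub hm hs ht (Finset.filter_subset _ _) ?_)
    · rw [← one_sub_binomCdf]
      linarith [binomCdf_nonneg m x hs]
    · intro k hk
      rw [Finset.mem_filter, not_le] at hk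
      rw [abs_of_neg (sub_neg.2 hlt), abs_of_pos (by linarith)]
      linarith
  · rw [indicator_of_notMem (by simpa using hgt), sub_zero,
      abs_of_nonneg (binomCdf_nonneg m x hs)]
    refine le_min (binomCdf_le_one m x hs)
      (sum_binomPMFr_le_of_le_abs_sub hm hs ht (Finset.filter_subset _ _) ?_)
    intro k hk
    rw [Finset.mem_filter] at hk
    rw [abs_of_pos (sub_pos.2 hgt), abs_sub_comm, abs_of_nonneg (by linarith)]
    linarith

lemma binomCdf_zero {m : ℕ} (hm : 0 < m) (s : ℝ) : binomCdf m 0 s = (1 - s) ^ m := by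
  have hm' : (0 : ℝ) < m := Nat.cast_pos.2 hm
  rw [binomCdf, Finset.sum_eq_single 0]
  · simp [binomPMFr]
  · intro k hk hk0
    rw [Finset.mem_filter] at hk
    have : (0 : ℝ) < k / m := div_pos (Nat.cast_pos.2 (Nat.pos_of_ne_zero hk0)) hm'
    linarith [hk.2]
  · intro h
    exact absurd (Finset.mem_filter.2 ⟨Finset.mem_range.2 m.succ_pos, by simp⟩) h

lemma intervalIntegrable_min_one_div_sq {c : ℝ} (hc : 0 ≤ c) (a b : ℝ) :
    IntervalIntegrable (fun u : ℝ => min 1 (c / u ^ 2)) volume a b := by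
  refine (intervalIntegrable_const (c := (1 : ℝ))).mono_fun
    (measurable_const.min (by fun_prop)).aestronglyMeasurable (Filter.Eventually.of_forall ?_)
  intro u
  show ‖min 1 (c / u ^ 2)‖ ≤ ‖(1 : ℝ)‖
  rw [norm_one, Real.norm_of_nonneg (le_min zero_le_one (by positivity))]
  exact min_le_left _ _

lemma intervalIntegral_min_one_div_sq_le {c b : ℝ} (hc : 0 < c) (hb : 0 ≤ b) :
    ∫ u in 0..b, min 1 (c / u ^ 2) ≤ 2 * √c := by
  have hsc : 0 < √c := sqrt_pos.2 hc
  have hint := intervalIntegrable_min_one_div_sq hc.le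
  have near : ∀ r, 0 ≤ r → ∫ u in 0..r, min 1 (c / u ^ 2) ≤ r := fun r hr => by
    simpa using intervalIntegral.integral_mono_on hr (hint 0 r) intervalIntegrable_const
      fun u _ => min_le_left 1 (c / u ^ 2)
  rcases le_or_gt b √c with hbc | hbc
  · linarith [near b hb]
  have hzpow : ∀ u : ℝ, c / u ^ 2 = c * u ^ (-2 : ℤ) := fun u => by
    rw [zpow_neg, zpow_ofNat, div_eq_mul_inv]
  have h0 : (0 : ℝ) ∉ uIcc √c b := by
    rw [uIcc_of_le hbc.le]; exact fun h => hsc.not_ge h.1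
  have far : ∫ u in √c..b, min 1 (c / u ^ 2) ≤ √c := calc
    _ ≤ ∫ u in √c..b, c / u ^ 2 := by
      refine intervalIntegral.integral_mono_on hbc.le (hint _ _) ?_ fun u _ => min_le_right _ _
      simp_rw [hzpow]
      exact (intervalIntegral.intervalIntegrable_zpow (Or.inr h0)).const_mul c
    _ = √c - c / b := by
      simp_rw [hzpow, intervalIntegral.integral_const_mul,
        integral_zpow (n := -2) (Or.inr ⟨by norm_num, h0⟩)]
      norm_num [zpow_neg_one]
      field_simp
      linear_combination (-1 : ℝ) * sq_sqrt hc.le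
    _ ≤ √c := by linarith [div_pos hc (hsc.trans hbc)]
  rw [← intervalIntegral.integral_add_adjacent_intervals (hint 0 √c) (hint √c b)]
  linarith [near √c hsc.le]

lemma intervalIntegral_min_one_div_sq_sub_le {c a b x : ℝ} (hc : 0 < c) (hax : a ≤ x)
    (hxb : x ≤ b) : ∫ s in a..b, min 1 (c / (s - x) ^ 2) ≤ 4 * √c := by
  have hint := intervalIntegrable_min_one_div_sq hc.le
  have hleft : ∫ u in a - x..0, min 1 (c / u ^ 2) = ∫ u in 0..x - a, min 1 (c / u ^ 2) := by
    have := intervalIntegral.integral_comp_neg (a := 0) (b := x - a) fun u => min 1 (c / u ^ 2)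
    simp only [neg_sq, neg_sub, neg_zero] at this
    exact this.symm
  rw [intervalIntegral.integral_comp_sub_right (fun u => min 1 (c / u ^ 2)) x,
    ← intervalIntegral.integral_add_adjacent_intervals (hint _ 0) (hint 0 _), hleft]
  linarith [intervalIntegral_min_one_div_sq_le hc (sub_nonneg.2 hax),
    intervalIntegral_min_one_div_sq_le hc (sub_nonneg.2 hxb)]

lemma binomLaw_apply (m : ℕ) (s : ℝ) {A : Set ℝ} (hA : MeasurableSet A) :
    binomLaw m s A = ∑ k ∈ Finset.range (m + 1),
      ENNReal.ofReal (binomPMFr m k s) * A.indicator 1 ((k : ℝ) / m) := by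
  simp only [binomLaw, Measure.finsetSum_apply, Measure.smul_apply, smul_eq_mul,
    Measure.dirac_apply' _ hA]

lemma measurable_binomLaw (m : ℕ) : Measurable (binomLaw m) := by
  refine Measure.measurable_of_measurable_coe _ fun A hA => ?_
  simp_rw [binomLaw_apply m _ hA]
  refine Finset.measurable_sum _ fun k _ => Measurable.mul_const ?_ _
  unfold binomPMFr
  fun_prop

lemma binomLaw_Iic (m : ℕ) (x : ℝ) {s : ℝ} (hs : s ∈ Icc (0 : ℝ) 1) :
    binomLaw m s (Iic x) = ENNReal.ofReal (binomCdf m x s) := by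
  rw [binomLaw_apply m s measurableSet_Iic, binomCdf, Finset.sum_filter,
    ENNReal.ofReal_sum_of_nonneg fun k _ => by split_ifs <;> simp [binomPMFr_nonneg m k hs]]
  refine Finset.sum_congr rfl fun k _ => ?_
  by_cases h : (k : ℝ) / m ≤ x <;> simp [h]

lemma cdfOf_densityMeasure_zero (f : ℝ → ℝ) : cdfOf (densityMeasure f) 0 = 0 := by
  have : volume.restrict (Icc (0 : ℝ) 1) (Iic 0) = 0 := by
    rw [Measure.restrict_apply measurableSet_Iic]
    refine measure_mono_null (fun s hs => ?_) (measure_singleton (0 : ℝ))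
    exact le_antisymm hs.1 hs.2.1
  simp [cdfOf, densityMeasure, withDensity_absolutelyContinuous _ _ this]

lemma integral_one_sub_pow (m : ℕ) : ∫ s in Icc (0 : ℝ) 1, (1 - s) ^ m = 1 / (m + 1) := by
  rw [integral_Icc_eq_integral_Ioc, ← intervalIntegral.integral_of_le zero_le_one,
    intervalIntegral.integral_comp_sub_left (fun u => u ^ m)]
  norm_num [integral_pow]

section densityMeasure

variable {f : ℝ → ℝ}

lemma ae_mem_Icc_densityMeasure : ∀ᵐ s ∂densityMeasure f, s ∈ Icc (0 : ℝ) 1 :=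
  withDensity_absolutelyContinuous _ _ (ae_restrict_mem measurableSet_Icc)

lemma toReal_lintegral_densityMeasure (hf : IntegrableOn f (Icc (0 : ℝ) 1))
    (hf0 : ∀ s ∈ Icc (0 : ℝ) 1, 0 ≤ f s) {w : ℝ → ℝ} (hw : Measurable w)
    (hw0 : ∀ s ∈ Icc (0 : ℝ) 1, 0 ≤ w s) (hw1 : ∀ s ∈ Icc (0 : ℝ) 1, w s ≤ 1) :
    (∫⁻ s, ENNReal.ofReal (w s) ∂densityMeasure f).toReal = ∫ s in Icc (0 : ℝ) 1, f s * w s := by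
  have hfw : IntegrableOn (fun s => f s * w s) (Icc (0 : ℝ) 1) :=
    hf.mul_bdd hw.aestronglyMeasurable <| (ae_restrict_mem measurableSet_Icc).mono fun s hs => by
      rw [Real.norm_of_nonneg (hw0 s hs)]; exact hw1 s hs
  rw [densityMeasure, lintegral_withDensity_eq_lintegral_mul₀ hf.aemeasurable.ennreal_ofReal
      hw.ennreal_ofReal.aemeasurable,
    integral_eq_lintegral_of_nonneg_ae ((ae_restrict_mem measurableSet_Icc).mono fun s hs =>
      mul_nonneg (hf0 s hs) (hw0 s hs)) hfw.aestronglyMeasurable]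
  congr 1
  refine lintegral_congr_ae ((ae_restrict_mem measurableSet_Icc).mono fun s hs => ?_)
  simp [ENNReal.ofReal_mul (hf0 s hs)]

lemma cdfOf_densityMeasure (hf : IntegrableOn f (Icc (0 : ℝ) 1))
    (hf0 : ∀ s ∈ Icc (0 : ℝ) 1, 0 ≤ f s) (x : ℝ) :
    cdfOf (densityMeasure f) x = ∫ s in Icc (0 : ℝ) 1, f s * (Iic x).indicator 1 s := by
  rw [← toReal_lintegral_densityMeasure hf hf0 (measurable_one.indicator measurableSet_Iic)
    (fun s _ => indicator_nonneg (fun _ _ => zero_le_one) s)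
    (fun s _ => indicator_le_self' (fun _ _ => zero_le_one) s)]
  rw [cdfOf, ← lintegral_indicator_one measurableSet_Iic]
  congr 1
  refine lintegral_congr fun s => ?_
  by_cases h : s ∈ Iic x <;> simp [h]

lemma cdfOf_mixLaw_densityMeasure (hf : IntegrableOn f (Icc (0 : ℝ) 1))
    (hf0 : ∀ s ∈ Icc (0 : ℝ) 1, 0 ≤ f s) (m : ℕ) (x : ℝ) :
    cdfOf (mixLaw (densityMeasure f) m) x = ∫ s in Icc (0 : ℝ) 1, f s * binomCdf m x s := by
  rw [cdfOf, mixLaw, Measure.bind_apply measurableSet_Iic (measurable_binomLaw m).aemeasurable,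
    lintegral_congr_ae (ae_mem_Icc_densityMeasure.mono fun s hs => binomLaw_Iic m x hs)]
  exact toReal_lintegral_densityMeasure hf hf0 (continuous_binomCdf m x).measurable
    (fun s hs => binomCdf_nonneg m x hs) (fun s hs => binomCdf_le_one m x hs)

lemma abs_cdfOf_mixLaw_sub_cdfOf_le (hf : IntegrableOn f (Icc (0 : ℝ) 1))
    (hf0 : ∀ s ∈ Icc (0 : ℝ) 1, 0 ≤ f s) {fmax : ℝ} (hfmax : ∀ s ∈ Icc (0 : ℝ) 1, f s ≤ fmax)
    {m : ℕ} (hm : 0 < m) {x : ℝ} (hx : x ∈ Icc (0 : ℝ) 1) :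
    |cdfOf (mixLaw (densityMeasure f) m) x - cdfOf (densityMeasure f) x| ≤ 2 * fmax / √m := by
  have hm' : (0 : ℝ) < m := Nat.cast_pos.2 hm
  have hc : 0 < (4 * (m : ℝ))⁻¹ := by positivity
  have hfmax0 : 0 ≤ fmax := (hf0 0 (by simp)).trans (hfmax 0 (by simp))
  have hind : IntegrableOn (fun s => f s * (Iic x).indicator 1 s) (Icc (0 : ℝ) 1) :=
    hf.mul_bdd (c := 1) ((measurable_one.indicator measurableSet_Iic).aestronglyMeasurable)
      (Filter.Eventually.of_forall fun s => by
        by_cases h : s ∈ Iic x <;> simp [h])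
  have hB : IntegrableOn (fun s => f s * binomCdf m x s) (Icc (0 : ℝ) 1) :=
    hf.mul_bdd (continuous_binomCdf m x).aestronglyMeasurable
      ((ae_restrict_mem measurableSet_Icc).mono fun s hs => by
        rw [Real.norm_of_nonneg (binomCdf_nonneg m x hs)]; exact binomCdf_le_one m x hs)
  have hmajor : IntegrableOn (fun s => fmax * min 1 ((4 * (m : ℝ))⁻¹ / (s - x) ^ 2))
      (Icc (0 : ℝ) 1) := by
    have := (intervalIntegrable_min_one_div_sq hc.le (-x) (1 - x)).comp_sub_right x
    rw [neg_add_cancel, sub_add_cancel] at this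
    exact ((intervalIntegrable_iff_integrableOn_Icc_of_le zero_le_one).1 this).const_mul fmax
  rw [cdfOf_mixLaw_densityMeasure hf hf0, cdfOf_densityMeasure hf hf0, ← integral_sub hB hind,
    ← Real.norm_eq_abs]
  calc _ ≤ ∫ s in Icc (0 : ℝ) 1, fmax * min 1 ((4 * (m : ℝ))⁻¹ / (s - x) ^ 2) := by
        refine norm_integral_le_of_norm_le hmajor ?_
        have hne : ∀ᵐ s ∂volume.restrict (Icc (0 : ℝ) 1), s ≠ x :=
          ae_restrict_of_ae (measure_eq_zero_iff_ae_notMem.1 (measure_singleton x))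
        filter_upwards [ae_restrict_mem measurableSet_Icc, hne] with s hs hsx
        rw [← mul_sub, norm_mul, Real.norm_of_nonneg (hf0 s hs), Real.norm_eq_abs]
        exact mul_le_mul (hfmax s hs) (abs_binomCdf_sub_indicator_le hm hs hsx) (abs_nonneg _)
          hfmax0
    _ = fmax * ∫ s in (0 : ℝ)..1, min 1 ((4 * (m : ℝ))⁻¹ / (s - x) ^ 2) := by
        rw [integral_const_mul, integral_Icc_eq_integral_Ioc,
          intervalIntegral.integral_of_le zero_le_one]
    _ ≤ fmax * (4 * √(4 * (m : ℝ))⁻¹) :=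
        mul_le_mul_of_nonneg_left (intervalIntegral_min_one_div_sq_sub_le hc hx.1 hx.2) hfmax0
    _ = 2 * fmax / √m := by
        rw [sqrt_inv, sqrt_mul zero_le_four, show √(4 : ℝ) = 2 by
          rw [show (4 : ℝ) = 2 ^ 2 by norm_num, sqrt_sq zero_le_two]]
        field_simp
        ring

lemma div_add_one_le_cdfOf_mixLaw_zero (hf : IntegrableOn f (Icc (0 : ℝ) 1))
    (hf0 : ∀ s ∈ Icc (0 : ℝ) 1, 0 ≤ f s) {fmin : ℝ} (hfmin : ∀ s ∈ Icc (0 : ℝ) 1, fmin ≤ f s)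
    {m : ℕ} (hm : 0 < m) :
    fmin / (m + 1) ≤ cdfOf (mixLaw (densityMeasure f) m) 0 := by
  rw [cdfOf_mixLaw_densityMeasure hf hf0]
  simp_rw [binomCdf_zero hm]
  calc fmin / (m + 1) = ∫ s in Icc (0 : ℝ) 1, fmin * (1 - s) ^ m := by
        rw [integral_const_mul, integral_one_sub_pow, mul_one_div]
    _ ≤ ∫ s in Icc (0 : ℝ) 1, f s * (1 - s) ^ m := by
        refine setIntegral_mono_on (Continuous.integrableOn_Icc (by fun_prop))
          ?_ measurableSet_Icc fun s hs =>
            mul_le_mul_of_nonneg_right (hfmin s hs) (pow_nonneg (sub_nonneg.2 hs.2) m)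
        refine hf.mul_bdd (c := 1) (by fun_prop)
          ((ae_restrict_mem measurableSet_Icc).mono fun s hs => ?_)
        rw [norm_pow, Real.norm_of_nonneg (sub_nonneg.2 hs.2)]
        exact pow_le_one₀ (sub_nonneg.2 hs.2) (by linarith [hs.1])

end densityMeasure

/-- If `F` has a density `f` on `[0,1]` with `0 < f_min ≤ f ≤ f_max < ∞`,
then for every positive integer `m`,
`f_min/(m+1) ≤ sup_{x ∈ [0,1]} |F^{(m)}(x) − F(x)| ≤ f_max·√(2π)/√m`. -/
theorem stmt3 (f : ℝ → ℝ) (fmin fmax : ℝ) (hmin : 0 < fmin)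
    (hbound : ∀ x ∈ Set.Icc (0:ℝ) 1, fmin ≤ f x ∧ f x ≤ fmax)
    (hdens : ∫ x in Set.Icc (0:ℝ) 1, f x = 1)
    (m : ℕ) (hm : 1 ≤ m) :
    fmin / (m + 1)
      ≤ (⨆ x : Set.Icc (0:ℝ) 1,
          |cdfOf (mixLaw (densityMeasure f) m) x - cdfOf (densityMeasure f) x|)
    ∧ (⨆ x : Set.Icc (0:ℝ) 1,
          |cdfOf (mixLaw (densityMeasure f) m) x - cdfOf (densityMeasure f) x|)
      ≤ fmax * Real.sqrt (2 * π) / Real.sqrt m := by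
  have hf : IntegrableOn f (Icc (0 : ℝ) 1) :=
    .of_integral_ne_zero (by rw [hdens]; exact one_ne_zero)
  have hf0 : ∀ s ∈ Icc (0 : ℝ) 1, 0 ≤ f s := fun s hs => hmin.le.trans (hbound s hs).1
  have hfmax0 : 0 ≤ fmax := (hf0 0 (by simp)).trans (hbound 0 (by simp)).2
  have h2pi : 2 ≤ √(2 * π) := le_sqrt_of_sq_le (by nlinarith [pi_gt_three])
  have hupper : ∀ x : Icc (0 : ℝ) 1,
      |cdfOf (mixLaw (densityMeasure f) m) x - cdfOf (densityMeasure f) x|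
        ≤ fmax * √(2 * π) / √m := fun x => calc
    _ ≤ 2 * fmax / √m :=
      abs_cdfOf_mixLaw_sub_cdfOf_le hf hf0 (fun s hs => (hbound s hs).2) hm x.2
    _ ≤ fmax * √(2 * π) / √m := by rw [mul_comm]; gcongr
  have hlower : fmin / (m + 1)
      ≤ |cdfOf (mixLaw (densityMeasure f) m) 0 - cdfOf (densityMeasure f) 0| := by
    rw [cdfOf_densityMeasure_zero, sub_zero]
    exact (div_add_one_le_cdfOf_mixLaw_zero hf hf0 (fun s hs => (hbound s hs).1) hm).trans
      (le_abs_self _)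
  exact ⟨hlower.trans (le_ciSup ⟨_, forall_mem_range.2 hupper⟩ ⟨0, by simp⟩), ciSup_le hupper⟩
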